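/- arXiv:alg-geom/9603013 — 4 statements merged into one kernel-verified Lean document; each statement's English description precedes it below -/
import Mathlib

section
/- Let q be a prime power and k = F_{q^2}. Suppose f(T) = Σ_{i=1}^{q} a_i T^i ∈ k[T] has degree q, f(0)=0, and satisfies f(T)^n ≡ f(T)^{nq} (mod T^{q^2} - T) where n·m = q+1 for integers n ≥ 2 and m ≥ 2. Then a_1 ≠ 0 and a_i = 0 for all 2 ≤ i ≤ q-1; i.e., f(T) = a_q T^q + a_1 T. -/
open Polynomial Finset


lemma coeff_pow_top {R : Type*} [CommRing R] (n d r : ℕ) (c : R) (w : R[X])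
    (hw : w.natDegree ≤ r) (hrd : r < d) :
    ((w + C c * X ^ d) ^ (n + 1)).coeff (n * d + r) =
      (n + 1) * c ^ n * w.coeff r := by
  rw [add_pow, finset_sum_coeff]
  have hterm : ∀ k : ℕ, w ^ k * (C c * X ^ d) ^ (n + 1 - k) * ((n+1).choose k : R[X]) =
      C (c ^ (n + 1 - k) * ((n+1).choose k : R)) * (w ^ k * X ^ (d * (n + 1 - k))) := by
    intro k
    rw [mul_pow, ← C_pow, ← pow_mul, ← C_eq_natCast, C_mul]
    ring
  rw [Finset.sum_eq_single 1]
  · have h1 : n + 1 - 1 = n := by omega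
    rw [hterm, coeff_C_mul, pow_one, mul_comm d, coeff_mul_X_pow', h1,
      if_pos (Nat.le_add_right _ _), Nat.add_sub_cancel_left, Nat.choose_one_right]
    push_cast
    ring
  · intro k hk hk1
    rw [Finset.mem_range] at hk
    rw [hterm, coeff_C_mul, mul_comm d, coeff_mul_X_pow']
    rcases k with _ | _ | j
    · rw [if_neg (by simp only [Nat.sub_zero]; nlinarith), mul_zero]
    · exact absurd rfl hk1
    · have hkn : j + 2 ≤ n + 1 := by omega
      have heq : n * d = (n + 1 - (j+2)) * d + (j+1) * d := by
        rw [← add_mul, show n + 1 - (j+2) + (j+1) = n from by omega]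
      have hle : (n + 1 - (j+2)) * d ≤ n * d + r := by
        rw [heq, add_assoc]; exact Nat.le_add_right _ _
      rw [if_pos hle]
      have hidx : n * d + r - (n + 1 - (j+2)) * d = (j+1) * d + r := by
        rw [heq, add_assoc, Nat.add_sub_cancel_left]
      rw [hidx]
      have hdeg : (w ^ (j+2)).natDegree < (j+1) * d + r := by
        have h1 : (w ^ (j+2)).natDegree ≤ (j+2) * r :=
          le_trans (natDegree_pow_le) (by nlinarith)
        nlinarith
      rw [coeff_eq_zero_of_natDegree_lt hdeg, mul_zero]
  · intro h
    exact absurd (Finset.mem_range.2 (by omega)) h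

lemma coeff_pow_bot {R : Type*} [CommRing R] (n s : ℕ) (c : R) (w : R[X])
    (hw : ∀ i < s, w.coeff i = 0) (hs : 2 ≤ s) :
    ((C c * X + w) ^ (n + 1)).coeff (n + s) = (n + 1) * c ^ n * w.coeff s := by
  rw [add_pow, finset_sum_coeff]
  have hterm : ∀ k : ℕ, (C c * X) ^ k * w ^ (n + 1 - k) * ((n+1).choose k : R[X]) =
      C (c ^ k * ((n+1).choose k : R)) * (w ^ (n + 1 - k) * X ^ k) := by
    intro k
    rw [mul_pow, ← C_pow, ← C_eq_natCast, C_mul]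
    ring
  have hwdvd : X ^ s ∣ w := X_pow_dvd_iff.2 hw
  rw [Finset.sum_eq_single n]
  · have h1 : n + 1 - n = 1 := by omega
    rw [hterm, coeff_C_mul, coeff_mul_X_pow', if_pos (by omega), h1, pow_one,
      Nat.add_sub_cancel_left, Nat.choose_succ_self_right]
    push_cast
    ring
  · intro k hk hk1
    rw [hterm, coeff_C_mul, coeff_mul_X_pow']
    have hkr : k ≤ n + 1 := by have := Finset.mem_range.1 hk; omega
    rw [if_pos (by omega)]
    rcases Nat.lt_or_ge k n with h | h
    · -- k < n : low coefficient of w-power vanishes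
      have hdvd : X ^ (s * (n + 1 - k)) ∣ w ^ (n + 1 - k) := by
        rw [pow_mul]
        exact pow_dvd_pow_of_dvd hwdvd _
      have hz : (w ^ (n + 1 - k)).coeff (n + s - k) = 0 := by
        refine X_pow_dvd_iff.1 hdvd _ ?_
        have ha : 1 ≤ n - k := by omega
        have : n - k < s * (n - k) := by nlinarith
        have h2 : s * (n + 1 - k) = s * (n - k) + s := by
          rw [← Nat.mul_succ]; congr 1; omega
        omega
      rw [hz, mul_zero]
    · -- k = n+1
      have hk' : k = n + 1 := by omega
      subst hk'
      simp only [Nat.sub_self, pow_zero]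
      rw [coeff_one, if_neg (by omega), mul_zero]
  · intro h
    exact absurd (Finset.mem_range.2 (by omega)) h

set_option maxHeartbeats 1000000 in
/-- let `k = F_{q^2}` and `f ∈ k[T]` with `deg f = q`, `f(0) = 0`,
and `f^n ≡ f^{nq} (mod T^{q^2} - T)`, where `nm = q+1`, `n ≥ 2`, `m ≥ 2`.
Then the coefficient `a_1 ≠ 0` and `a_i = 0` for `2 ≤ i ≤ q-1`;
i.e. `f(T) = a_q T^q + a_1 T`. -/
theorem stmt_1 (q : ℕ) (hq : ∃ p e : ℕ, p.Prime ∧ 0 < e ∧ q = p ^ e)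
    (k : Type*) [Field k] [Fintype k] (hcard : Fintype.card k = q ^ 2)
    (n m : ℕ) (hn : 2 ≤ n) (hm : 2 ≤ m) (hnm : n * m = q + 1)
    (f : k[X]) (hdeg : f.natDegree = q) (h0 : f.coeff 0 = 0)
    (hcong : (X ^ (q ^ 2) - X : k[X]) ∣ (f ^ n - f ^ (n * q))) :
    f.coeff 1 ≠ 0 ∧ (∀ i : ℕ, 2 ≤ i → i ≤ q - 1 → f.coeff i = 0) := by
  obtain ⟨p, e, hp, he, hqe⟩ := hq
  haveI : Fact p.Prime := ⟨hp⟩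
  have hq3 : 3 ≤ q := by nlinarith
  have h2n : 2 * n ≤ q + 1 := by nlinarith
  have hnq : n < q := by omega
  have hq0 : 0 < q := by omega
  -- characteristic
  have hchar : CharP k p := by
    obtain ⟨n₀, hp', hcard'⟩ := FiniteField.card k (ringChar k)
    have hdvd : ringChar k ∣ p ^ (e * 2) := by
      rw [pow_mul, ← hqe, ← hcard, hcard']
      exact dvd_pow_self _ (by positivity)
    have : ringChar k = p :=
      (Nat.prime_dvd_prime_iff_eq hp' hp).1 (hp'.dvd_of_dvd_pow hdvd)
    exact this ▸ ringChar.charP k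
  haveI := hchar
  -- n is invertible in k
  have hnk : (n : k) ≠ 0 := by
    rw [Ne, CharP.cast_eq_zero_iff k p]
    intro hpn
    have h1 : p ∣ q + 1 := hnm ▸ Dvd.dvd.mul_right hpn m
    have h2 : p ∣ q := hqe ▸ dvd_pow_self p (by omega)
    have h4 : p ∣ 1 := (Nat.dvd_add_right h2).1 h1
    have := Nat.le_of_dvd one_pos h4
    have := hp.two_le
    omega
  have hfne : f ≠ 0 := by
    intro h
    rw [h, natDegree_zero] at hdeg
    omega
  have haq : f.coeff q ≠ 0 := by
    have := leadingCoeff_ne_zero.2 hfne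
    rwa [leadingCoeff, hdeg] at this
  have hxq : ∀ x : k, x ^ q ^ 2 = x := by
    intro x
    rw [← hcard]
    exact FiniteField.pow_card x
  obtain ⟨N, rfl⟩ : ∃ N, n = N + 1 := ⟨n - 1, by omega⟩
  have hN1 : 1 ≤ N := by omega
  set F := f ^ (N + 1) with hF
  have hFdeg : F.natDegree = (N + 1) * q := by rw [hF, natDegree_pow, hdeg]
  have hnqq : (N + 1) * q < q ^ 2 := by nlinarith
  set σ : ℕ → ℕ := fun t => (t % q) * q + t / q with hσ
  have hσlt : ∀ t, t < q ^ 2 → σ t < q ^ 2 := by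
    intro t ht
    have h1 : t / q < q := (Nat.div_lt_iff_lt_mul hq0).2 (by nlinarith)
    have h2 : t % q < q := Nat.mod_lt _ hq0
    simp only [hσ]
    nlinarith
  have hσσ : ∀ t, t < q ^ 2 → σ (σ t) = t := by
    intro t ht
    have h1 : t / q < q := (Nat.div_lt_iff_lt_mul hq0).2 (by nlinarith)
    simp only [hσ]
    rw [mul_comm (t % q) q, Nat.mul_add_mod, Nat.mod_eq_of_lt h1, Nat.mul_add_div hq0,
      Nat.div_eq_of_lt h1, add_zero]
    exact Nat.div_add_mod' t q
  set G : k[X] := ∑ a ∈ F.support, C ((F.coeff a) ^ q) * X ^ (σ a) with hG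
  have hsupp : ∀ a ∈ F.support, a < q ^ 2 := by
    intro a ha
    have := le_natDegree_of_ne_zero (mem_support_iff.1 ha)
    omega
  have hGeval : ∀ x : k, G.eval x = (F.eval x) ^ q := by
    intro x
    have heF : F.eval x = ∑ a ∈ F.support, F.coeff a * x ^ a := by
      rw [eval_eq_sum, Polynomial.sum_def]
    have hfrob : (∑ a ∈ F.support, F.coeff a * x ^ a) ^ q
        = ∑ a ∈ F.support, (F.coeff a * x ^ a) ^ q := by
      rw [hqe]; exact sum_pow_char_pow p e _ _
    rw [heF, hfrob, hG, eval_finset_sum]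
    refine Finset.sum_congr rfl fun a ha => ?_
    rw [eval_mul, eval_C, eval_pow, eval_X, mul_pow]
    congr 1
    have hdm : a * q = (a / q) * q ^ 2 + (a % q) * q := by
      have h := Nat.div_add_mod a q
      calc a * q = (q * (a / q) + a % q) * q := by rw [h]
        _ = (a / q) * q ^ 2 + (a % q) * q := by ring
    symm
    calc (x ^ a) ^ q = x ^ (a / q * q ^ 2 + a % q * q) := by rw [← pow_mul, hdm]
      _ = (x ^ (a / q)) ^ q ^ 2 * x ^ (a % q * q) := by rw [pow_add, pow_mul]
      _ = x ^ (a / q) * x ^ (a % q * q) := by rw [hxq]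
      _ = x ^ (a % q * q + a / q) := by rw [pow_add, mul_comm]
      _ = x ^ (σ a) := by simp only [hσ]
  have hFG : F = G := by
    have hGdeg : G.natDegree ≤ q ^ 2 - 1 := by
      apply natDegree_sum_le_of_forall_le
      intro a ha
      refine le_trans (natDegree_C_mul_X_pow_le _ _) ?_
      have := hσlt a (hsupp a ha)
      omega
    have heval : ∀ x : k, (F - G).eval x = 0 := by
      intro x
      obtain ⟨c, hc⟩ := hcong
      have h1 : (f ^ (N + 1) - f ^ ((N + 1) * q)).eval x = 0 := by
        rw [hc, eval_mul, eval_sub, eval_pow, eval_X, hxq, sub_self, zero_mul]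
      rw [eval_sub, eval_pow, eval_pow] at h1
      rw [eval_sub, hGeval, hF, eval_pow, ← pow_mul, sub_eq_zero]
      exact sub_eq_zero.1 h1
    have hdegFG : (F - G).natDegree < Fintype.card k := by
      rw [hcard]
      refine lt_of_le_of_lt (natDegree_sub_le _ _) ?_
      apply max_lt <;> omega
    have := Polynomial.eq_zero_of_natDegree_lt_card_of_eval_eq_zero (F - G)
      Function.injective_id (fun x => heval x) hdegFG
    exact sub_eq_zero.1 this
  have hcoeff : ∀ t, t < q ^ 2 → F.coeff t = (F.coeff (σ t)) ^ q := by
    intro t ht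
    have h1 : ∀ a ∈ F.support, a ≠ σ t → (C ((F.coeff a) ^ q) * X ^ (σ a)).coeff t = 0 := by
      intro a ha hne
      rw [coeff_C_mul, coeff_X_pow, if_neg, mul_zero]
      intro hEq
      exact hne (by rw [hEq, hσσ a (hsupp a ha)])
    have h2 : σ t ∉ F.support → (C ((F.coeff (σ t)) ^ q) * X ^ (σ (σ t))).coeff t = 0 := by
      intro hns
      rw [notMem_support_iff.1 hns, zero_pow (by omega : q ≠ 0), map_zero, zero_mul,
        coeff_zero]
    conv_lhs => rw [hFG]
    rw [hG, finset_sum_coeff, Finset.sum_eq_single (σ t) h1 h2, coeff_C_mul, coeff_X_pow,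
      if_pos (hσσ t ht).symm, mul_one]
  -- basic coefficient values
  have hcoef_nq : F.coeff ((N + 1) * q) = (f.coeff q) ^ (N + 1) := by
    have h1 : F.coeff ((N + 1) * q) = F.leadingCoeff := by rw [leadingCoeff, hFdeg]
    rw [h1, hF, leadingCoeff_pow, leadingCoeff, hdeg]
  have hcoef_n : F.coeff (N + 1) = (f.coeff 1) ^ (N + 1) := by
    obtain ⟨g, hg⟩ := X_dvd_iff.2 h0
    have hg1 : f.coeff 1 = g.coeff 0 := by
      rw [hg]
      simpa using coeff_X_mul g 0
    have h2 : F.coeff (N + 1) = (g ^ (N + 1)).coeff 0 := by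
      rw [hF, hg, mul_pow]
      simpa using coeff_X_pow_mul (g ^ (N + 1)) (N + 1) 0
    rw [h2, hg1, coeff_zero_eq_eval_zero, eval_pow, ← coeff_zero_eq_eval_zero]
  have hσn : σ (N + 1) = (N + 1) * q := by
    simp only [hσ]
    rw [Nat.mod_eq_of_lt hnq, Nat.div_eq_of_lt hnq, add_zero]
  -- a_1 ≠ 0
  have ha1 : f.coeff 1 ≠ 0 := by
    have h1 := hcoeff (N + 1) (by nlinarith)
    rw [hσn, hcoef_n, hcoef_nq] at h1
    intro hc
    rw [hc, zero_pow (by omega : N + 1 ≠ 0)] at h1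
    exact (pow_ne_zero _ (pow_ne_zero _ haq)) h1.symm
  -- vanishing relations
  have hR2 : ∀ r, N + 1 ≤ r → r ≤ q - 1 → F.coeff (N * q + r) = 0 := by
    intro r h1 h2
    have ht : N * q + r < q ^ 2 := by
      have h4 : N * q + r < (N + 1) * q := by
        have hrq : r < q := by omega
        nlinarith
      exact h4.trans hnqq
    have hσt : σ (N * q + r) = r * q + N := by
      simp only [hσ]
      rw [mul_comm N q, Nat.mul_add_mod, Nat.mod_eq_of_lt (by omega : r < q),
        Nat.mul_add_div hq0, Nat.div_eq_of_lt (by omega : r < q), add_zero]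
    have h3 := hcoeff (N * q + r) ht
    rw [hσt] at h3
    rw [h3, coeff_eq_zero_of_natDegree_lt (by
        rw [hFdeg]
        have h5 : (N + 1) * q ≤ r * q := Nat.mul_le_mul_right q h1
        omega),
      zero_pow (by omega : q ≠ 0)]
  have hR3 : ∀ s, 2 ≤ s → s ≤ N → F.coeff (N + s) = 0 := by
    intro s h1 h2
    have htq : N + s < q := by omega
    have ht : N + s < q ^ 2 := htq.trans (by nlinarith)
    have hσt : σ (N + s) = (N + s) * q := by
      simp only [hσ]
      rw [Nat.mod_eq_of_lt htq, Nat.div_eq_of_lt htq, add_zero]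
    have h3 := hcoeff (N + s) ht
    rw [hσt] at h3
    rw [h3, coeff_eq_zero_of_natDegree_lt (by
        rw [hFdeg]
        have h5 : (N + 2) * q ≤ (N + s) * q := Nat.mul_le_mul_right q (by omega)
        nlinarith),
      zero_pow (by omega : q ≠ 0)]
  have hNk : ((N : k) + 1) ≠ 0 := by push_cast at hnk; exact hnk
  -- downward induction
  have step_down : ∀ r, N + 1 ≤ r → r ≤ q - 1 →
      (∀ i, r < i → i ≤ q - 1 → f.coeff i = 0) → f.coeff r = 0 := by
    intro r h1 h2 hi
    set w := f - C (f.coeff q) * X ^ q with hw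
    have hwdeg : w.natDegree ≤ r := by
      rw [natDegree_le_iff_coeff_eq_zero]
      intro i hir
      rw [hw, coeff_sub, coeff_C_mul, coeff_X_pow]
      rcases lt_trichotomy i q with h | h | h
      · rw [if_neg (by omega), mul_zero, sub_zero]
        exact hi i hir (by omega)
      · rw [if_pos h, mul_one]
        rw [h, sub_self]
      · rw [if_neg (by omega), mul_zero, sub_zero]
        exact coeff_eq_zero_of_natDegree_lt (by omega)
    have hfw : f = w + C (f.coeff q) * X ^ q := by rw [hw]; ring
    have hcoe := coeff_pow_top N q r (f.coeff q) w hwdeg (by omega)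
    rw [← hfw] at hcoe
    have hz := hR2 r h1 h2
    rw [hF] at hz
    have hzz : ((N : k) + 1) * (f.coeff q) ^ N * w.coeff r = 0 := by
      rw [← hcoe]; exact hz
    have hwr : w.coeff r = 0 :=
      (mul_eq_zero.1 hzz).resolve_left (mul_ne_zero hNk (pow_ne_zero _ haq))
    have hw2 : w.coeff r = f.coeff r := by
      rw [hw, coeff_sub, coeff_C_mul, coeff_X_pow, if_neg (by omega : ¬ r = q),
        mul_zero, sub_zero]
    rw [← hw2]; exact hwr
  have down : ∀ j r, N + 1 ≤ r → r ≤ q - 1 → q - 1 - r ≤ j → f.coeff r = 0 := by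
    intro j
    induction j with
    | zero =>
      intro r h1 h2 h3
      exact step_down r h1 h2 (fun i hi1 hi2 => absurd hi1 (by omega))
    | succ j ih =>
      intro r h1 h2 h3
      exact step_down r h1 h2 (fun i hi1 hi2 => ih i (by omega) hi2 (by omega))
  -- upward induction
  have step_up : ∀ s, 2 ≤ s → s ≤ N →
      (∀ i, 2 ≤ i → i < s → f.coeff i = 0) → f.coeff s = 0 := by
    intro s h1 h2 hi
    set w := f - C (f.coeff 1) * X ^ 1 with hw
    have hwlow : ∀ i, i < s → w.coeff i = 0 := by
      intro i his
      rw [hw, coeff_sub, coeff_C_mul, coeff_X_pow]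
      match i, his with
      | 0, _ => rw [if_neg (by omega), mul_zero, sub_zero]; exact h0
      | 1, _ => rw [if_pos rfl, mul_one, sub_self]
      | (i + 2), his => 
        rw [if_neg (by omega), mul_zero, sub_zero]
        exact hi (i + 2) (by omega) his
    have hfw : f = C (f.coeff 1) * X + w := by rw [hw]; ring
    have hcoe := coeff_pow_bot N s (f.coeff 1) w hwlow h1
    rw [← hfw] at hcoe
    have hz := hR3 s h1 h2
    rw [hF] at hz
    have hzz : ((N : k) + 1) * (f.coeff 1) ^ N * w.coeff s = 0 := by
      rw [← hcoe]; exact hz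
    have hwr : w.coeff s = 0 :=
      (mul_eq_zero.1 hzz).resolve_left (mul_ne_zero hNk (pow_ne_zero _ ha1))
    have hw2 : w.coeff s = f.coeff s := by
      rw [hw, coeff_sub, coeff_C_mul, coeff_X_pow, if_neg (by omega : ¬ s = 1),
        mul_zero, sub_zero]
    rw [← hw2]; exact hwr
  have up : ∀ j s, 2 ≤ s → s ≤ N → s ≤ j → f.coeff s = 0 := by
    intro j
    induction j with
    | zero => intro s h1 h2 h3; omega
    | succ j ih =>
      intro s h1 h2 h3
      exact step_up s h1 h2 (fun i hi1 hi2 => ih i hi1 (by omega) (by omega))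
  refine ⟨ha1, ?_⟩
  intro i h2i hiq
  rcases Nat.lt_or_ge i (N + 1) with h | h
  · exact up i i h2i (by omega) le_rfl
  · exact down (q - 1) i h hiq (by omega)
end

section
/- Let q be a prime power with q ≡ 1 (mod 2), and let m = (q+1)/2. If m, q, q+1 are elements of a numerical semigroup H with 2m ≥ q+1, and the genus (number of gaps) of H is at least (q−1)^2/4, then either 2m = q+1 or m = q−1. -/
/-!
Write `m = q - E`. Since `q ∈ H`, the genus of `H` is at most the sum, over the residues `c`
modulo `q`, of the least `k` with `k * q + c ∈ H`. The elements `c * (q + 1) = c * q + c` and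
`(j + 1) * m + v * (q + 1) = (j + v) * q + (q + v - (j + 1) * E)` (`c < s`, `j < N`, `v < E`)
reach every residue when `q = N * E + s`, and `N = q / (E + 1)` makes `N ≤ s ≤ N + E`. Hence
`4 * genus ≤ 2 s (s - 1) + 2 E N (N - 1) + 2 N E (E - 1)`, and this is `< (q - 1) ^ 2` as soon as
`N ≥ 2` and `E ≥ 2`, that is, as soon as `q + 2 ≤ 2 * m` and `m ≤ q - 2`.
-/

open Finset

namespace AddSubmonoid

theorem ncard_compl_le_sum_div (S : AddSubmonoid ℕ) {q : ℕ} (hq : 0 < q) (hqS : q ∈ S)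
    {ι : Type*} (I : Finset ι) (f : ι → ℕ) (hfS : ∀ i ∈ I, f i ∈ S)
    (hcover : ∀ c < q, ∃ i ∈ I, f i % q = c) :
    (S : Set ℕ)ᶜ.ncard ≤ ∑ i ∈ I, f i / q := by
  set T := I.biUnion fun i => (range (f i / q)).image fun k => k * q + f i % q
  have hsub : (S : Set ℕ)ᶜ ⊆ T := by
    intro x hx
    obtain ⟨i, hi, hir⟩ := hcover (x % q) (Nat.mod_lt x hq)
    have hlt : x / q < f i / q := by
      by_contra! hle
      obtain ⟨k, hk⟩ := Nat.exists_eq_add_of_le hle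
      have hx_eq : x = f i + k • q := by
        rw [← Nat.div_add_mod' x q, ← Nat.div_add_mod' (f i) q, hk, hir, smul_eq_mul]
        ring
      exact hx (hx_eq ▸ S.add_mem (hfS i hi) (S.nsmul_mem hqS k))
    simp only [T, coe_biUnion, Set.mem_iUnion, mem_coe, mem_image, mem_range]
    exact ⟨i, hi, x / q, hlt, by rw [hir, Nat.div_add_mod']⟩
  calc (S : Set ℕ)ᶜ.ncard ≤ (T : Set ℕ).ncard := Set.ncard_le_ncard hsub T.finite_toSet
    _ = #T := Set.ncard_coe_finset T
    _ ≤ ∑ i ∈ I, #((range (f i / q)).image fun k => k * q + f i % q) := card_biUnion_le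
    _ ≤ ∑ i ∈ I, f i / q := sum_le_sum fun i _ => card_image_le.trans (card_range _).le

theorem ncard_compl_le_of_mem_of_succ_mem {S : AddSubmonoid ℕ} {m q E N s : ℕ} (hq : 0 < q)
    (hmS : m ∈ S) (hqS : q ∈ S) (hq1S : q + 1 ∈ S) (hmq : m + E = q) (hNs : N * E + s = q) :
    (S : Set ℕ)ᶜ.ncard ≤ ∑ c ∈ range s, c + ∑ j ∈ range N, ∑ v ∈ range E, (j + v) := by
  let f : ℕ ⊕ ℕ × ℕ → ℕ := Sum.elim (fun c => c * (q + 1)) fun p => (p.1 + 1) * m + p.2 * (q + 1)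
  have hinl {c : ℕ} (hc : c < q) : f (.inl c) / q = c ∧ f (.inl c) % q = c :=
    (Nat.div_mod_unique hq).2 ⟨by simp only [f, Sum.elim_inl]; ring, hc⟩
  have hinr {j v : ℕ} (hj : j < N) (hv : v < E) :
      f (.inr (j, v)) / q = j + v ∧ f (.inr (j, v)) % q = q + v - (j + 1) * E := by
    have hjE : (j + 1) * E ≤ N * E := Nat.mul_le_mul_right E hj
    have hE : E ≤ (j + 1) * E := Nat.le_mul_of_pos_left E j.succ_pos
    refine (Nat.div_mod_unique hq).2 ⟨?_, by omega⟩
    subst hmq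
    simp only [f, Sum.elim_inr]
    zify [(by omega : (j + 1) * E ≤ m + E + v)]
    ring
  calc (S : Set ℕ)ᶜ.ncard ≤ ∑ i ∈ (range s).disjSum (range N ×ˢ range E), f i / q := by
        refine ncard_compl_le_sum_div S hq hqS _ f ?_ ?_
        · rintro (c | ⟨j, v⟩) -
          · exact S.nsmul_mem hq1S c
          · exact S.add_mem (S.nsmul_mem hmS _) (S.nsmul_mem hq1S _)
        · intro c hc
          by_cases hcs : c < s
          · exact ⟨.inl c, by simpa using hcs, (hinl hc).2⟩
          -- `q - 1 - c = j * E + w` is hit by the index `(j, E - 1 - w)`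
          set t := q - 1 - c
          have ht : t < N * E := by omega
          have hE : 0 < E := Nat.pos_of_mul_pos_left (by omega : 0 < N * E)
          have hj : t / E < N := Nat.div_lt_of_lt_mul (by rwa [mul_comm])
          have hv : E - 1 - t % E < E := by omega
          refine ⟨.inr (t / E, E - 1 - t % E), by simp [hj, hv], ?_⟩
          rw [(hinr hj hv).2]
          have hdm := Nat.div_add_mod t E
          have hw := Nat.mod_lt t hE
          have hjE : (t / E + 1) * E = E * (t / E) + E := by ring
          omega
    _ = ∑ c ∈ range s, c + ∑ j ∈ range N, ∑ v ∈ range E, (j + v) := by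
        rw [sum_disjSum, sum_product]
        congr 1
        · exact sum_congr rfl fun c hc => (hinl (by simp at hc; omega)).1
        · exact sum_congr rfl fun j hj => sum_congr rfl fun v hv =>
            (hinr (by simpa using hj) (by simpa using hv)).1

end AddSubmonoid

theorem four_mul_sum_lt_sq {N E s : ℕ} (hN : 2 ≤ N) (hE : 2 ≤ E) (hNs : N ≤ s) (hsN : s ≤ N + E) :
    4 * (∑ c ∈ range s, c + ∑ j ∈ range N, ∑ v ∈ range E, (j + v)) < (N * E + s - 1) ^ 2 := by
  have hjv : ∑ j ∈ range N, ∑ v ∈ range E, (j + v) =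
      E * ∑ j ∈ range N, j + N * ∑ v ∈ range E, v := by
    rw [← sum_product', sum_add_distrib, sum_product, sum_product_right]
    simp only [sum_const, card_range, smul_eq_mul, mul_sum]
  have hs := sum_range_id_mul_two s
  have hN' := sum_range_id_mul_two N
  have hE' := sum_range_id_mul_two E
  rw [hjv]
  zify [(by omega : 1 ≤ s), (by omega : 1 ≤ N), (by omega : 1 ≤ E),
    (by nlinarith : 1 ≤ N * E + s)] at *
  nlinarith [mul_nonneg (sub_nonneg.2 hNs) (sub_nonneg.2 hsN),
    mul_nonneg (sub_nonneg.2 hN) (sub_nonneg.2 hE),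
    mul_nonneg (mul_nonneg (sub_nonneg.2 hN) (sub_nonneg.2 hE)) (sub_nonneg.2 hE)]

theorem stmt_4_general (q : ℕ) (m : ℕ) (hm : m ≤ q - 1) (h2m : q + 1 ≤ 2 * m)
    (H : Set ℕ) (hzero : (0 : ℕ) ∈ H)
    (hadd : ∀ a ∈ H, ∀ b ∈ H, a + b ∈ H)
    (hmH : m ∈ H) (hqH : q ∈ H) (hq1H : q + 1 ∈ H)
    (hgenus : (q - 1) ^ 2 ≤ 4 * {x : ℕ | x ∉ H}.ncard) :
    2 * m = q + 1 ∨ m = q - 1 := by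
  by_contra! hne
  let S : AddSubmonoid ℕ := ⟨⟨H, fun ha hb => hadd _ ha _ hb⟩, hzero⟩
  set E := q - m
  set N := q / (E + 1)
  have hE : 2 ≤ E := by omega
  have hN : 2 ≤ N := (Nat.le_div_iff_mul_le (by omega)).2 (by omega)
  have hdiv : (E + 1) * N + q % (E + 1) = q := Nat.div_add_mod q (E + 1)
  have hmod : q % (E + 1) < E + 1 := Nat.mod_lt q E.succ_pos
  have hNE : (E + 1) * N = N * E + N := by ring
  have hNs : N * E + (q - N * E) = q := by omega
  have hgaps := AddSubmonoid.ncard_compl_le_of_mem_of_succ_mem (S := S) (by omega) hmH hqH hq1H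
    (by omega : m + E = q) hNs
  have hlt := four_mul_sum_lt_sq hN hE (by omega : N ≤ q - N * E) (by omega)
  rw [hNs] at hlt
  exact (hlt.trans_le (hgenus.trans (Nat.mul_le_mul_left 4 hgaps))).false

/-- if `q` is an odd prime power, `H` is a numerical semigroup
containing `m, q, q+1` with `m ≤ q-1` and `2m ≥ q+1`, and the genus (number of
gaps) of `H` is at least `(q-1)²/4`, then `2m = q+1` or `m = q-1`. -/
theorem stmt_4 (q : ℕ) (hq : ∃ p e : ℕ, p.Prime ∧ 0 < e ∧ q = p ^ e)
    (hodd : Odd q) (m : ℕ) (hm : m ≤ q - 1) (h2m : q + 1 ≤ 2 * m)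
    (H : Set ℕ) (hzero : (0 : ℕ) ∈ H)
    (hadd : ∀ a ∈ H, ∀ b ∈ H, a + b ∈ H)
    (hfin : {x : ℕ | x ∉ H}.Finite)
    (hmH : m ∈ H) (hqH : q ∈ H) (hq1H : q + 1 ∈ H)
    (hgenus : (q - 1) ^ 2 ≤ 4 * {x : ℕ | x ∉ H}.ncard) :
    2 * m = q + 1 ∨ m = q - 1 :=
  stmt_4_general q m hm h2m H hzero hadd hmH hqH hq1H hgenus
end

section
/- Let X be a maximal curve over k = F_{q^2} and P a point of X with P ∈ X(F_{q^4}) but P ∉ X(k). Then q−1 is a non-gap at P. If instead P ∉ X(F_{q^4}), then q is a non-gap at P. -/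
/-- Abstract data of a maximal curve over `k = F_{q^2}`: the set of points of
the curve (over the algebraic closure), the `k`-Frobenius acting on points
(so that `X(k)` is its fixed-point set and `X(F_{q^4})` the fixed points of its
square), linear equivalence of divisors (elements of the free abelian group
`Point →₀ ℤ`), and the facts that the Frobenius acts as multiplication by `-q`
on the Jacobian (degree-zero divisor class group) and that
`#X(k) = q² + 2gq + 1` (maximality, `g` the genus). -/
structure MaximalCurveData (q g : ℕ) where
  Point : Type
  Frob : Point → Point
  LinEq : (Point →₀ ℤ) → (Point →₀ ℤ) → Prop
  linEq_refl : ∀ D, LinEq D D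
  linEq_symm : ∀ {D E}, LinEq D E → LinEq E D
  linEq_trans : ∀ {D E F}, LinEq D E → LinEq E F → LinEq D F
  linEq_add : ∀ {D E} (F), LinEq D E → LinEq (D + F) (E + F)
  frob_neg_q : ∀ P Q : Point,
    LinEq (Finsupp.single (Frob P) 1 - Finsupp.single (Frob Q) 1)
      ((-(q : ℤ)) • (Finsupp.single P 1 - Finsupp.single Q 1))
  card_rational : Nat.card {P : Point // Frob P = P} = q ^ 2 + 2 * g * q + 1

/-- `n` is a Weierstrass non-gap at `P` iff some effective divisor avoiding `P`
is linearly equivalent to `nP` (equivalently, there is a rational function with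
pole divisor exactly `nP`). -/
def MaximalCurveData.Nongap {q g : ℕ} (C : MaximalCurveData q g)
    (P : C.Point) (n : ℕ) : Prop :=
  ∃ D : C.Point →₀ ℤ, (∀ R, 0 ≤ D R) ∧ D P = 0 ∧
    C.LinEq D ((n : ℤ) • Finsupp.single P 1)

/-- on a maximal curve over `k = F_{q^2}`, if a point `P` lies in
`X(F_{q^4}) \ X(k)` then `q - 1` is a non-gap at `P`, while if
`P ∉ X(F_{q^4})` then `q` is a non-gap at `P`. -/
theorem stmt_10 (q g : ℕ) (hq : ∃ p e : ℕ, p.Prime ∧ 0 < e ∧ q = p ^ e)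
    (C : MaximalCurveData q g) (P : C.Point) :
    (C.Frob (C.Frob P) = P → C.Frob P ≠ P → C.Nongap P (q - 1)) ∧
    (C.Frob (C.Frob P) ≠ P → C.Nongap P q) := by
  classical
  have hq1 : 1 ≤ q := by
    obtain ⟨p, e, hp, he, rfl⟩ := hq
    exact Nat.one_le_pow _ _ hp.pos
  have step : ∀ A B D : C.Point →₀ ℤ, C.LinEq A B → C.LinEq D (D - A + B) := by
    intro A B D h
    have h2 := C.linEq_add (D - A) h
    rwa [show A + (D - A) = D by abel, show B + (D - A) = D - A + B by abel] at h2
  constructor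
  · -- P ∈ X(F_{q^4}) \ X(k) : q - 1 is a non-gap
    intro h2 h1
    refine ⟨((q : ℤ) - 1) • Finsupp.single (C.Frob P) 1, ?_, ?_, ?_⟩
    · intro R
      simp only [Finsupp.smul_apply, Finsupp.single_apply, smul_eq_mul]
      split_ifs <;> simp <;> omega
    · simp [Finsupp.single_apply, h1]
    · have h := C.frob_neg_q P (C.Frob P)
      rw [h2] at h
      have t := step _ _ (((q : ℤ) - 1) • Finsupp.single (C.Frob P) 1) (C.linEq_symm h)
      have heq : ((q : ℤ) - 1) • (Finsupp.single (C.Frob P) 1 : C.Point →₀ ℤ) -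
          (-(q : ℤ)) • ((Finsupp.single P 1 : C.Point →₀ ℤ) - Finsupp.single (C.Frob P) 1) +
          ((Finsupp.single (C.Frob P) 1 : C.Point →₀ ℤ) - Finsupp.single P 1) =
          ((q - 1 : ℕ) : ℤ) • (Finsupp.single P 1 : C.Point →₀ ℤ) := by
        have hc : ((q - 1 : ℕ) : ℤ) = (q : ℤ) - 1 := by omega
        rw [hc]; module
      rwa [heq] at t
  · -- P ∉ X(F_{q^4}) : q is a non-gap
    intro h2n
    have hFP : C.Frob P ≠ P := fun h => h2n (by rw [h, h])
    obtain ⟨P₀, hP₀⟩ : ∃ P₀ : C.Point, C.Frob P₀ = P₀ := by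
      have hpos : 0 < Nat.card {P : C.Point // C.Frob P = P} := by
        rw [C.card_rational]; positivity
      obtain ⟨⟨P₀, hP₀⟩⟩ := (Nat.card_pos_iff.mp hpos).1
      exact ⟨P₀, hP₀⟩
    set D : C.Point →₀ ℤ :=
      Finsupp.single (C.Frob (C.Frob P)) 1 + ((q : ℤ) - 1) • Finsupp.single (C.Frob P) 1
      with hD
    refine ⟨D, ?_, ?_, ?_⟩
    · intro R
      simp only [hD, Finsupp.add_apply, Finsupp.smul_apply, Finsupp.single_apply,
        smul_eq_mul]
      split_ifs <;> simp <;> omega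
    · simp [hD, Finsupp.single_apply, h2n, hFP]
    · have h1 := C.frob_neg_q (C.Frob P) P₀
      rw [hP₀] at h1
      have h2 := C.frob_neg_q P P₀
      rw [hP₀] at h2
      have t1 := step _ _ D h1
      have t2 := step _ _
        (D - (Finsupp.single (C.Frob (C.Frob P)) 1 - Finsupp.single P₀ 1) +
          (-(q : ℤ)) • (Finsupp.single (C.Frob P) 1 - Finsupp.single P₀ 1))
        (C.linEq_symm h2)
      have t := C.linEq_trans t1 t2
      have heq : D - ((Finsupp.single (C.Frob (C.Frob P)) 1 : C.Point →₀ ℤ) - Finsupp.single P₀ 1) +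
          (-(q : ℤ)) • ((Finsupp.single (C.Frob P) 1 : C.Point →₀ ℤ) - Finsupp.single P₀ 1) -
          (-(q : ℤ)) • ((Finsupp.single P 1 : C.Point →₀ ℤ) - Finsupp.single P₀ 1) +
          ((Finsupp.single (C.Frob P) 1 : C.Point →₀ ℤ) - Finsupp.single P₀ 1) =
          (q : ℤ) • (Finsupp.single P 1 : C.Point →₀ ℤ) := by
        rw [hD]; module
      rwa [heq] at t
end

section
/- Let q ≥ 2 and t ≥ 1 be integers and m ≥ 2, n ≥ 2 integers with nm = q and 2g ≤ q(m−1). If (q−1)((q+1)/(t+1) − 1) < 2g, then t ≥ n. -/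
/-- arithmetic core of Corollary 0.2(ii): from `nm = q`,
the Lewittes bound `2g ≤ q(m-1)` and `(q-1)((q+1)/(t+1) - 1) < 2g`,
deduce `t ≥ n`. -/
theorem stmt_14 (q t n m : ℕ) (hq : 2 ≤ q) (ht : 1 ≤ t) (hn : 2 ≤ n) (hm : 2 ≤ m)
    (hnm : n * m = q) (g : ℚ)
    (hup : 2 * g ≤ (q : ℚ) * ((m : ℚ) - 1))
    (hlow : ((q : ℚ) - 1) * (((q : ℚ) + 1) / ((t : ℚ) + 1) - 1) < 2 * g) :
    n ≤ t := by
  by_contra h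
  push_neg at h
  have h1 : (t : ℚ) + 1 ≤ (n : ℚ) := by exact_mod_cast h
  have hq' : (q : ℚ) = (n : ℚ) * m := by exact_mod_cast hnm.symm
  have ht0 : (0:ℚ) < (t : ℚ) + 1 := by positivity
  have hn0 : (0:ℚ) < (n : ℚ) := by positivity
  have hd : ((q : ℚ) + 1) / ((t : ℚ) + 1) * ((t : ℚ) + 1) = (q : ℚ) + 1 :=
    div_mul_cancel₀ _ (ne_of_gt ht0)
  have hm1 : (2:ℚ) ≤ (m : ℚ) := by exact_mod_cast hm
  have hn1 : (2:ℚ) ≤ (n : ℚ) := by exact_mod_cast hn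
  have hq1 : (2:ℚ) ≤ (q : ℚ) := by exact_mod_cast hq
  have hqpos : (0:ℚ) < (q:ℚ) - 1 := by linarith
  nlinarith [mul_pos ht0 hn0, sq_nonneg ((q:ℚ) - (t:ℚ) - 1),
    mul_le_mul_of_nonneg_left h1 hqpos.le]
end
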